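/- Let X be a δ-hyperbolic geodesic space, n ≥ 3, and (γ₁,...,γ_n) a K-aligned sequence of finite oriented geodesics where γ₂,...,γ_{n-1} each have length greater than 2K+120δ. Then (γ_i, γ_j) is (K+60δ)-aligned for every 1 ≤ i < j ≤ n. -/
import Mathlib


open Metric Set

variable {X : Type*} [MetricSpace X]

/-- The Gromov product `(x,y)_z`. -/
noncomputable def gromovProduct {X : Type*} [MetricSpace X] (x y z : X) : ℝ :=
  (dist x z + dist z y - dist x y) / 2

/-- `γ` is an arclength-parametrized geodesic on the interval `[a, b]`. -/
def IsGeodesicOn {X : Type*} [MetricSpace X] (γ : ℝ → X) (a b : ℝ) : Prop :=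
  ∀ s ∈ Set.Icc a b, ∀ t ∈ Set.Icc a b, dist (γ s) (γ t) = |s - t|

/-- `γ` is a geodesic from `x` to `y`, parametrized by arclength on `[0, dist x y]`. -/
def GeodesicFromTo {X : Type*} [MetricSpace X] (γ : ℝ → X) (x y : X) : Prop :=
  γ 0 = x ∧ γ (dist x y) = y ∧ IsGeodesicOn γ 0 (dist x y)

/-- `X` is a geodesic metric space. -/
def GeodesicSpace (X : Type*) [MetricSpace X] : Prop :=
  ∀ x y : X, ∃ γ : ℝ → X, GeodesicFromTo γ x y

/-- All geodesic triangles in `X` are `4δ`-thin: for a triangle with vertices `y, x, z`, the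
initial subsegments of `[y,x]` and `[y,z]` of length `(x,z)_y` are `4δ`-synchronized. -/
def ThinTriangles (X : Type*) [MetricSpace X] (δ : ℝ) : Prop :=
  ∀ x y z : X, ∀ γ₁ γ₂ : ℝ → X, GeodesicFromTo γ₁ y x → GeodesicFromTo γ₂ y z →
    ∀ t ∈ Set.Icc 0 (gromovProduct x z y), dist (γ₁ t) (γ₂ t) ≤ 4 * δ

/-- The set of nearest-point projections of `x` onto the subset `A`. -/
def projSet {X : Type*} [MetricSpace X] (A : Set X) (x : X) : Set X :=
  {p ∈ A | dist x p = Metric.infDist x A}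

/-- The pair of oriented geodesics `(γ₁|[0,L₁], γ₂|[0,L₂])` is `K`-aligned: every nearest-point
projection of a point of `γ₂` onto `γ₁` lies within `K` of the ending point `γ₁ L₁`, and every
nearest-point projection of a point of `γ₁` onto `γ₂` lies within `K` of the beginning point
`γ₂ 0`. -/
def AlignedPair {X : Type*} [MetricSpace X] (K : ℝ) (γ₁ : ℝ → X) (L₁ : ℝ)
    (γ₂ : ℝ → X) (L₂ : ℝ) : Prop :=
  (∀ t ∈ Set.Icc 0 L₂, ∀ p ∈ projSet (γ₁ '' Set.Icc 0 L₁) (γ₂ t), dist p (γ₁ L₁) ≤ K) ∧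
  (∀ t ∈ Set.Icc 0 L₁, ∀ p ∈ projSet (γ₂ '' Set.Icc 0 L₂) (γ₁ t), dist p (γ₂ 0) ≤ K)

-- aux lemmas
lemma gromov_nonneg (x y z : X) : 0 ≤ gromovProduct x y z := by
  have h := dist_triangle x z y
  simp only [gromovProduct]; linarith

lemma gromov_le_dist_left (x y z : X) : gromovProduct x y z ≤ dist z x := by
  have h := dist_triangle z x y
  have h2 : dist x z = dist z x := dist_comm x z
  simp only [gromovProduct]; linarith

lemma gromov_le_dist_right (x y z : X) : gromovProduct x y z ≤ dist z y := by
  have h := dist_triangle x y z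
  have h2 : dist y z = dist z y := dist_comm y z
  simp only [gromovProduct]; linarith

lemma sub_geodesic {γ : ℝ → X} {L : ℝ} (hg : IsGeodesicOn γ 0 L) {u s : ℝ}
    (hu : u ∈ Icc (0:ℝ) L) (hs : s ∈ Icc (0:ℝ) L) :
    ∃ β : ℝ → X, GeodesicFromTo β (γ u) (γ s) ∧
      ∀ t ∈ Icc (0:ℝ) (dist (γ u) (γ s)), β t ∈ γ '' Icc 0 L := by
  have hd : dist (γ u) (γ s) = |u - s| := hg u hu s hs
  rcases le_total u s with hus | hus
  · refine ⟨fun t => γ (u + t), ⟨by simp, ?_, ?_⟩, ?_⟩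
    · rw [hd, abs_of_nonpos (by linarith)]; ring_nf
    · intro a ha b hb
      rw [hd, abs_of_nonpos (by linarith)] at ha hb
      have haI : u + a ∈ Icc (0:ℝ) L := ⟨by linarith [hu.1, ha.1], by linarith [hs.2, ha.2]⟩
      have hbI : u + b ∈ Icc (0:ℝ) L := ⟨by linarith [hu.1, hb.1], by linarith [hs.2, hb.2]⟩
      rw [hg _ haI _ hbI]
      congr 1; ring
    · intro t ht
      rw [hd, abs_of_nonpos (by linarith)] at ht
      exact ⟨u + t, ⟨by linarith [hu.1, ht.1], by linarith [hs.2, ht.2]⟩, rfl⟩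
  · refine ⟨fun t => γ (u - t), ⟨by simp, ?_, ?_⟩, ?_⟩
    · rw [hd, abs_of_nonneg (by linarith)]; ring_nf
    · intro a ha b hb
      rw [hd, abs_of_nonneg (by linarith)] at ha hb
      have haI : u - a ∈ Icc (0:ℝ) L := ⟨by linarith [hs.1, ha.2], by linarith [hu.2, ha.1]⟩
      have hbI : u - b ∈ Icc (0:ℝ) L := ⟨by linarith [hs.1, hb.2], by linarith [hu.2, hb.1]⟩
      rw [hg _ haI _ hbI]
      rw [abs_sub_comm]; congr 1; ring
    · intro t ht
      rw [hd, abs_of_nonneg (by linarith)] at ht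
      exact ⟨u - t, ⟨by linarith [hs.1, ht.2], by linarith [hu.2, ht.1]⟩, rfl⟩

lemma projSet_nonempty {γ : ℝ → X} {L : ℝ} (hL : 0 ≤ L) (hg : IsGeodesicOn γ 0 L) (x : X) :
    (projSet (γ '' Icc 0 L) x).Nonempty := by
  have hlip : LipschitzOnWith 1 γ (Icc 0 L) := by
    rw [lipschitzOnWith_iff_dist_le_mul]
    intro a ha b hb
    rw [hg a ha b hb, Real.dist_eq]
    simp
  have hcomp : IsCompact (γ '' Icc 0 L) := isCompact_Icc.image_of_continuousOn hlip.continuousOn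
  have hne : (γ '' Icc 0 L).Nonempty := ⟨γ 0, mem_image_of_mem _ (left_mem_Icc.2 hL)⟩
  obtain ⟨p, hpS, hpd⟩ := hcomp.exists_infDist_eq_dist hne x
  exact ⟨p, hpS, hpd.symm⟩

/-- Key lemma: a nearest-point projection `p` of `x` onto a geodesic satisfies
`(x,y)_p ≤ 4δ` for every point `y` of the geodesic. -/
lemma dist_proj_add {δ : ℝ} (hgeo : GeodesicSpace X) (hthin : ThinTriangles X δ)
    {γ : ℝ → X} {L : ℝ} (hg : IsGeodesicOn γ 0 L)
    {x p y : X} (hp : p ∈ projSet (γ '' Icc 0 L) x) (hy : y ∈ γ '' Icc 0 L) :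
    dist x p + dist p y ≤ dist x y + 8 * δ := by
  obtain ⟨hpS, hpd⟩ := hp
  obtain ⟨u, hu, rfl⟩ := hpS
  obtain ⟨s, hs, rfl⟩ := hy
  obtain ⟨β, hβ, hβmem⟩ := sub_geodesic hg hu hs
  obtain ⟨η, hη⟩ := hgeo (γ u) x
  set t₀ := gromovProduct x (γ s) (γ u) with ht₀
  have h0 : 0 ≤ t₀ := gromov_nonneg _ _ _
  have h1 : t₀ ≤ dist (γ u) x := gromov_le_dist_left _ _ _
  have h2 : t₀ ≤ dist (γ u) (γ s) := gromov_le_dist_right _ _ _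
  have hthin' : dist (η t₀) (β t₀) ≤ 4 * δ :=
    hthin x (γ u) (γ s) η β hη hβ t₀ ⟨h0, le_rfl⟩
  have hηd : dist (η t₀) x = dist (γ u) x - t₀ := by
    have := hη.2.2 t₀ ⟨h0, h1⟩ (dist (γ u) x) ⟨dist_nonneg, le_rfl⟩
    rw [hη.2.1] at this
    rw [this, abs_of_nonpos (by linarith)]; ring
  have hmem : β t₀ ∈ γ '' Icc 0 L := hβmem t₀ ⟨h0, h2⟩
  have hkey : dist x (γ u) ≤ dist x (β t₀) := by
    rw [hpd]; exact infDist_le_dist_of_mem hmem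
  have hch : dist x (β t₀) ≤ dist x (η t₀) + dist (η t₀) (β t₀) := dist_triangle _ _ _
  have hc1 : dist x (η t₀) = dist (η t₀) x := dist_comm _ _
  have hc2 : dist x (γ u) = dist (γ u) x := dist_comm _ _
  have ht4 : t₀ ≤ 4 * δ := by linarith
  have hexp : t₀ = (dist x (γ u) + dist (γ u) (γ s) - dist x (γ s)) / 2 := rfl
  linarith

/-- Four-point inequality at constant `4δ`. -/
lemma four_point {δ : ℝ} (hgeo : GeodesicSpace X) (hthin : ThinTriangles X δ)
    (w x y z : X) :
    min (gromovProduct x y w) (gromovProduct y z w) - 4 * δ ≤ gromovProduct x z w := by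
  obtain ⟨α, hα⟩ := hgeo w x
  obtain ⟨β, hβ⟩ := hgeo w y
  obtain ⟨ζ, hζ⟩ := hgeo w z
  set m := min (gromovProduct x y w) (gromovProduct y z w) with hm
  have hm0 : 0 ≤ m := le_min (gromov_nonneg _ _ _) (gromov_nonneg _ _ _)
  have h1 : dist (α m) (β m) ≤ 4 * δ :=
    hthin x w y α β hα hβ m ⟨hm0, min_le_left _ _⟩
  have h2 : dist (β m) (ζ m) ≤ 4 * δ :=
    hthin y w z β ζ hβ hζ m ⟨hm0, min_le_right _ _⟩
  have hmx : m ≤ dist w x := le_trans (min_le_left _ _) (gromov_le_dist_left _ _ _)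
  have hmz : m ≤ dist w z := le_trans (min_le_right _ _) (gromov_le_dist_right _ _ _)
  have hαx : dist (α m) x = dist w x - m := by
    have := hα.2.2 m ⟨hm0, hmx⟩ (dist w x) ⟨dist_nonneg, le_rfl⟩
    rw [hα.2.1] at this
    rw [this, abs_of_nonpos (by linarith)]; ring
  have hζz : dist (ζ m) z = dist w z - m := by
    have := hζ.2.2 m ⟨hm0, hmz⟩ (dist w z) ⟨dist_nonneg, le_rfl⟩
    rw [hζ.2.1] at this
    rw [this, abs_of_nonpos (by linarith)]; ring
  have ht1 : dist x z ≤ dist x (α m) + dist (α m) z := dist_triangle _ _ _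
  have ht2 : dist (α m) z ≤ dist (α m) (β m) + dist (β m) z := dist_triangle _ _ _
  have ht3 : dist (β m) z ≤ dist (β m) (ζ m) + dist (ζ m) z := dist_triangle _ _ _
  have hc1 : dist x (α m) = dist (α m) x := dist_comm _ _
  have hcd1 : dist x w = dist w x := dist_comm _ _
  have hexp : gromovProduct x z w = (dist x w + dist w z - dist x z) / 2 := rfl
  linarith

/-- Behrstock-type dichotomy for a `K`-aligned pair. -/
lemma dichotomy {δ : ℝ} (hδ : 0 ≤ δ) (hgeo : GeodesicSpace X) (hthin : ThinTriangles X δ)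
    {K : ℝ} {γ γ' : ℝ → X} {L L' : ℝ}
    (hL : 0 ≤ L) (hg : IsGeodesicOn γ 0 L)
    (hL' : 0 ≤ L') (hg' : IsGeodesicOn γ' 0 L')
    (hal : AlignedPair K γ L γ' L') (x : X) :
    (∀ p ∈ projSet (γ '' Icc 0 L) x, dist p (γ L) ≤ K + 12 * δ) ∨
    (∀ q ∈ projSet (γ' '' Icc 0 L') x, dist q (γ' 0) ≤ K + 24 * δ) := by
  by_cases hcase : ∀ p ∈ projSet (γ '' Icc 0 L) x, dist p (γ L) ≤ K + 12 * δ
  · exact Or.inl hcase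
  push_neg at hcase
  obtain ⟨p, hp, hpfar⟩ := hcase
  right
  intro q hq
  -- r : projection of q onto γ
  obtain ⟨r, hr⟩ := projSet_nonempty hL hg q
  -- s : projection of p onto γ'
  obtain ⟨s, hs⟩ := projSet_nonempty hL' hg' p
  -- q is on γ'
  obtain ⟨tq, htq, hqeq⟩ := hq.1
  -- p is on γ
  obtain ⟨tp, htp, hpeq⟩ := hp.1
  -- alignment: dist r (γ L) ≤ K
  have hrK : dist r (γ L) ≤ K := by
    have := hal.1 tq htq r
    rw [hqeq] at this
    exact this hr
  -- alignment: dist s (γ' 0) ≤ K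
  have hsK : dist s (γ' 0) ≤ K := by
    have := hal.2 tp htp s
    rw [hpeq] at this
    exact this hs
  have hpr : 12 * δ < dist p r := by
    have h1 := dist_triangle p r (γ L)
    linarith
  -- Lemma A instances
  have hA1 : dist x p + dist p r ≤ dist x r + 8 * δ :=
    dist_proj_add hgeo hthin hg hp hr.1
  have hA2 : dist q r + dist r p ≤ dist q p + 8 * δ :=
    dist_proj_add hgeo hthin hg hr hp.1
  have hcpr : dist r p = dist p r := dist_comm _ _
  have hcqp : dist q p = dist p q := dist_comm _ _
  -- Gromov product bounds
  have hxr : gromovProduct x r p ≤ 4 * δ := by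
    have hexp : gromovProduct x r p = (dist x p + dist p r - dist x r) / 2 := rfl
    linarith
  have hqr : 8 * δ < gromovProduct q r p := by
    have hexp : gromovProduct q r p = (dist q p + dist p r - dist q r) / 2 := rfl
    linarith
  have hxq : gromovProduct x q p ≤ 8 * δ := by
    by_contra hcon
    push_neg at hcon
    have hmin : 8 * δ < min (gromovProduct x q p) (gromovProduct q r p) := lt_min hcon hqr
    have hfp := four_point hgeo hthin p x q r
    linarith
  -- so dist x p + dist p q ≤ dist x q + 16δ
  have hstep1 : dist x p + dist p q ≤ dist x q + 16 * δ := by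
    have hexp : gromovProduct x q p = (dist x p + dist p q - dist x q) / 2 := rfl
    linarith
  -- q is an almost-projection of p onto γ'
  have hxq_le : dist x q ≤ dist x s := by
    rw [hq.2]; exact infDist_le_dist_of_mem hs.1
  have htri : dist x s ≤ dist x p + dist p s := dist_triangle _ _ _
  have hpq_le : dist p q ≤ dist p s + 16 * δ := by linarith
  -- compare with the true projection s
  have hA3 : dist p s + dist s q ≤ dist p q + 8 * δ :=
    dist_proj_add hgeo hthin hg' hs hq.1
  have hsq : dist s q ≤ 24 * δ := by linarith
  have := dist_triangle q s (γ' 0)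
  have hcqs : dist q s = dist s q := dist_comm _ _
  linarith

/-- If `(γ₁, …, γ_n)` is a `K`-aligned sequence of geodesics in a `δ`-hyperbolic geodesic
space, `n ≥ 3`, where the middle geodesics `γ₂, …, γ_{n-1}` are longer than `2K + 120δ`, then
`(γ_i, γ_j)` is `(K+60δ)`-aligned for all `1 ≤ i < j ≤ n`. -/
theorem alignedPair_of_chain (δ : ℝ) (hδ : 0 ≤ δ)
    (hgeo : GeodesicSpace X) (hthin : ThinTriangles X δ)
    (K : ℝ) (hK : 0 < K) (n : ℕ) (hn : 3 ≤ n)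
    (γ : ℕ → ℝ → X) (L : ℕ → ℝ)
    (hgeod : ∀ i, 1 ≤ i → i ≤ n → 0 ≤ L i ∧ IsGeodesicOn (γ i) 0 (L i))
    (hlong : ∀ i, 2 ≤ i → i ≤ n - 1 → L i > 2 * K + 120 * δ)
    (halign : ∀ i, 1 ≤ i → i < n → AlignedPair K (γ i) (L i) (γ (i+1)) (L (i+1))) :
    ∀ i j, 1 ≤ i → i < j → j ≤ n → AlignedPair (K + 60 * δ) (γ i) (L i) (γ j) (L j) := by
  intro i j hi hij hjn
  -- length of a middle geodesic equals the distance between its endpoints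
  have hlen : ∀ m, 1 ≤ m → m ≤ n → L m = dist (γ m 0) (γ m (L m)) := by
    intro m h1 h2
    obtain ⟨hLm, hgm⟩ := hgeod m h1 h2
    rw [hgm 0 ⟨le_rfl, hLm⟩ (L m) ⟨hLm, le_rfl⟩, zero_sub, abs_neg, abs_of_nonneg hLm]
  constructor
  · -- projections of points of γ j onto γ i lie near the end of γ i
    intro t ht p hp
    set x := γ j t with hx
    -- descending induction from j-1 down to i
    have key : ∀ k m, m + k = j - 1 → i ≤ m →
        ∀ p ∈ projSet (γ m '' Icc 0 (L m)) x, dist p (γ m (L m)) ≤ K + 12 * δ := by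
      intro k
      induction k with
      | zero =>
        intro m hmk him p hp
        have hm1 : m + 1 = j := by omega
        have hal := halign m (by omega) (by omega)
        rw [hm1] at hal
        have := hal.1 t ht p hp
        linarith
      | succ k ih =>
        intro m hmk him p hp
        have hd := dichotomy hδ hgeo hthin
          (hgeod m (by omega) (by omega)).1 (hgeod m (by omega) (by omega)).2
          (hgeod (m+1) (by omega) (by omega)).1 (hgeod (m+1) (by omega) (by omega)).2
          (halign m (by omega) (by omega)) x
        rcases hd with hd | hd
        · exact hd p hp
        · exfalso
          obtain ⟨q, hq⟩ := projSet_nonempty (hgeod (m+1) (by omega) (by omega)).1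
            (hgeod (m+1) (by omega) (by omega)).2 x
          have h1 := hd q hq
          have h2 := ih (m+1) (by omega) (by omega) q hq
          have h3 := hlong (m+1) (by omega) (by omega)
          have h4 := hlen (m+1) (by omega) (by omega)
          have h5 := dist_triangle (γ (m+1) 0) q (γ (m+1) (L (m+1)))
          have hc : dist (γ (m+1) 0) q = dist q (γ (m+1) 0) := dist_comm _ _
          linarith
    have := key (j - 1 - i) i (by omega) le_rfl p hp
    linarith
  · -- projections of points of γ i onto γ j lie near the start of γ j
    intro t ht q hq
    set x := γ i t with hx
    have key : ∀ m, i + 1 ≤ m → m ≤ j →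
        ∀ q ∈ projSet (γ m '' Icc 0 (L m)) x, dist q (γ m 0) ≤ K + 24 * δ := by
      intro m hm
      induction m, hm using Nat.le_induction with
      | base =>
        intro hmj q hq
        have hal := halign i (by omega) (by omega)
        have := hal.2 t ht q hq
        linarith
      | succ m hm ih =>
        intro hmj q hq
        have hd := dichotomy hδ hgeo hthin
          (hgeod m (by omega) (by omega)).1 (hgeod m (by omega) (by omega)).2
          (hgeod (m+1) (by omega) (by omega)).1 (hgeod (m+1) (by omega) (by omega)).2
          (halign m (by omega) (by omega)) x
        rcases hd with hd | hd
        · exfalso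
          obtain ⟨p, hp⟩ := projSet_nonempty (hgeod m (by omega) (by omega)).1
            (hgeod m (by omega) (by omega)).2 x
          have h1 := hd p hp
          have h2 := ih (by omega) p hp
          have h3 := hlong m (by omega) (by omega)
          have h4 := hlen m (by omega) (by omega)
          have h5 := dist_triangle (γ m 0) p (γ m (L m))
          have hc : dist (γ m 0) p = dist p (γ m 0) := dist_comm _ _
          linarith
        · exact hd q hq
    have := key j (by omega) (by omega) q hq
    linarith
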